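/- Let x, y be nonnegative integer vectors with common sum M \ge 1 and B(x,y) > 0. If the output edge-sequence distribution \pi of the sequential sampling algorithm assigns to each complete sequence (f_1,...,f_M) \in S(x,y), conditionally on its first t-1 entries, the probability \prod_{r=t}^{M} p(f_r | {f_1,...,f_{r-1}}) \cdot \prod (normalizing factors 1/(x_i - j + 1) for the remaining slots), then this conditional probability equals 1 / ( |{G with degree sequence (x,y) : {f_1,...,f_{t-1}} \subseteq G}| \cdot (x_i - j + 1)! \cdot \prod_{l > i} x_l! ), where step t processes vertex v_i at its j-th slot. In particular \pi is the uniform distribution on S(x,y). -/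

import Mathlib

open Finset

/-- Degree-sequence predicate for bipartite graphs on parts `(Fin n, Fin m)`. -/
def BipDeg {n m : ℕ} (G : Finset (Fin n × Fin m)) (x : Fin n → ℕ) (y : Fin m → ℕ) :
    Prop :=
  (∀ v, (G.filter fun p => p.1 = v).card = x v) ∧
    (∀ u, (G.filter fun p => p.2 = u).card = y u)

/-- The conditional probability `p(f | H)`: `0` if `f ∈ H`, otherwise the probability
that a uniformly random graph with degree sequence `(x,y)` containing `H` contains `f`. -/
noncomputable def pcond {n m : ℕ} (x : Fin n → ℕ) (y : Fin m → ℕ)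
    (H : Finset (Fin n × Fin m)) (f : Fin n × Fin m) : ℝ :=
  if f ∈ H then 0
  else (Nat.card {G : Finset (Fin n × Fin m) // BipDeg G x y ∧ insert f H ⊆ G} : ℝ) /
    (Nat.card {G : Finset (Fin n × Fin m) // BipDeg G x y ∧ H ⊆ G} : ℝ)

/-- Membership of an edge sequence in `S(x,y)`: the edges incident with vertex `i` of
some graph with degree sequence `(x,y)` form the `i`-th consecutive block. -/
def InS {n m M : ℕ} (x : Fin n → ℕ) (y : Fin m → ℕ) (f : Fin M → Fin n × Fin m) :
    Prop :=
  ∃ G : Finset (Fin n × Fin m), BipDeg G x y ∧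
    ∀ i : Fin n, G.filter (fun p => p.1 = i) =
      (Finset.univ.filter fun t : Fin M =>
        ∑ l ∈ Finset.Iio i, x l ≤ (t : ℕ) ∧ (t : ℕ) < ∑ l ∈ Finset.Iic i, x l).image f

/-!
Write `P_r = {f_1, …, f_{r-1}}` and `N(H)` for the number of graphs with degree sequence `(x,y)`
containing `H`. Since the `f_r` are distinct, `p(f_r | P_r) = N(P_{r+1}) / N(P_r)`, so the product
of conditional probabilities from step `t` on telescopes to `N(P_{M+1}) / N(P_t) = 1 / N(P_t)`:
a graph is the only graph of its degree sequence containing itself. For uniformity, a graph `G`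
arises from exactly `∏ x_l!` sequences in `S(x,y)`, one for each way of ordering the `x_l` edges
of `G` at every vertex `v_l`, so `|S(x,y)| = B(x,y) · ∏ x_l!`.
-/

section FiberwiseBijections

variable {ι α β : Type*} [Fintype ι] [DecidableEq ι] [Fintype α] [DecidableEq β]

theorem card_forall_image_fiber_eq (c : α → ι) (A : ι → Finset β)
    (hA : ∀ i, #{a | c a = i} = #(A i)) :
    Nat.card {g : α → β // ∀ i, ({a | c a = i} : Finset α).image g = A i} =
      ∏ i, (#(A i)).factorial := by
  classical
  have mem_of_image_eq {g : α → β} {i : ι} (hg : ({a | c a = i} : Finset α).image g = A i)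
      (a : {a // c a = i}) : g a ∈ A i :=
    hg ▸ mem_image_of_mem g (by simpa using a.2)
  have bijective_of_image_eq {g : α → β} {i : ι}
      (hg : ({a | c a = i} : Finset α).image g = A i) :
      Function.Bijective fun a : {a // c a = i} => (⟨g a, mem_of_image_eq hg a⟩ : A i) := by
    refine (Fintype.bijective_iff_surjective_and_card _).2 ⟨?_, ?_⟩
    · rintro ⟨b, hb⟩
      obtain ⟨a, ha, rfl⟩ := mem_image.1 (hg ▸ hb)
      exact ⟨⟨a, by simpa using ha⟩, rfl⟩
    · simp [← hA i, Fintype.card_subtype]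
  let e : {g : α → β // ∀ i, ({a | c a = i} : Finset α).image g = A i} ≃
      ∀ i, ({a // c a = i} ≃ A i) :=
    { toFun g i := Equiv.ofBijective _ (bijective_of_image_eq (g.2 i))
      invFun e := ⟨fun a => e (c a) ⟨a, rfl⟩, fun i => by
        have he (a : {a // c a = i}) : (e (c a) ⟨a, rfl⟩ : β) = e i a := by
          obtain ⟨a, rfl⟩ := a; rfl
        ext b
        simp only [mem_image, mem_filter, mem_univ, true_and]
        constructor
        · rintro ⟨a, rfl, rfl⟩
          exact (e (c a) ⟨a, rfl⟩).2
        · intro hb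
          exact ⟨(e i).symm ⟨b, hb⟩, ((e i).symm ⟨b, hb⟩).2, by simp [he]⟩⟩
      left_inv g := rfl
      right_inv e := by
        funext i
        ext ⟨a, rfl⟩
        rfl }
  rw [Nat.card_congr e, Nat.card_eq_fintype_card, Fintype.card_pi]
  refine prod_congr rfl fun i _ => ?_
  rw [Fintype.card_equiv (Fintype.equivOfCardEq (by simp [← hA i, Fintype.card_subtype]))]
  simp [← hA i, Fintype.card_subtype]

end FiberwiseBijections

section PrefixImage

variable {M : ℕ} {α : Type*} [DecidableEq α]

def prefixImage (f : Fin M → α) (s : ℕ) : Finset α :=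
  (univ.filter fun q : Fin M => (q : ℕ) < s).image f

theorem prefixImage_zero (f : Fin M → α) : prefixImage f 0 = ∅ := by
  simp [prefixImage]

theorem prefixImage_subset (f : Fin M → α) (s : ℕ) : prefixImage f s ⊆ univ.image f :=
  image_subset_image (filter_subset _ _)

theorem prefixImage_of_le (f : Fin M → α) {s : ℕ} (hs : M ≤ s) :
    prefixImage f s = univ.image f := by
  rw [prefixImage, filter_true_of_mem fun q _ => by omega]

theorem prefixImage_succ (f : Fin M → α) {s : ℕ} (hs : s < M) :
    prefixImage f (s + 1) = insert (f ⟨s, hs⟩) (prefixImage f s) := by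
  rw [prefixImage, prefixImage, ← image_insert]
  congr 1
  ext q
  simp only [mem_insert, mem_filter, mem_univ, true_and, Fin.ext_iff]
  omega

theorem apply_notMem_prefixImage {f : Fin M → α} (hf : Function.Injective f) {s : ℕ}
    (hs : s < M) : f ⟨s, hs⟩ ∉ prefixImage f s := by
  simpa [prefixImage, hf.eq_iff, Fin.ext_iff] using fun q : Fin M => Nat.ne_of_lt

end PrefixImage

section Telescoping

variable {n m M : ℕ} {x : Fin n → ℕ} {y : Fin m → ℕ}

theorem BipDeg.card_eq {G : Finset (Fin n × Fin m)} (hG : BipDeg G x y) : #G = ∑ i, x i := by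
  rw [card_eq_sum_card_fiberwise fun p _ => mem_univ p.1]
  exact sum_congr rfl fun i _ => hG.1 i

theorem BipDeg.eq_of_subset {G G' : Finset (Fin n × Fin m)} (hG : BipDeg G x y)
    (hG' : BipDeg G' x y) (h : G ⊆ G') : G = G' :=
  eq_of_subset_of_card_le h (by rw [hG.card_eq, hG'.card_eq])

variable (x y) in
noncomputable def numContaining (H : Finset (Fin n × Fin m)) : ℕ :=
  Nat.card {G : Finset (Fin n × Fin m) // BipDeg G x y ∧ H ⊆ G}

theorem numContaining_empty :
    numContaining x y ∅ = Nat.card {G : Finset (Fin n × Fin m) // BipDeg G x y} :=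
  Nat.card_congr (Equiv.subtypeEquivRight fun G => by simp)

theorem BipDeg.numContaining_self {G : Finset (Fin n × Fin m)} (hG : BipDeg G x y) :
    numContaining x y G = 1 := by
  rw [numContaining, Nat.card_eq_one_iff_unique]
  refine ⟨⟨fun G₁ G₂ => Subtype.ext ?_⟩, ⟨⟨G, hG, subset_rfl⟩⟩⟩
  rw [← hG.eq_of_subset G₁.2.1 G₁.2.2, ← hG.eq_of_subset G₂.2.1 G₂.2.2]

theorem numContaining_pos_of_subset {G H : Finset (Fin n × Fin m)} (hG : BipDeg G x y)
    (hH : H ⊆ G) : 0 < numContaining x y H :=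
  have : Nonempty {G : Finset (Fin n × Fin m) // BipDeg G x y ∧ H ⊆ G} := ⟨⟨G, hG, hH⟩⟩
  Nat.card_pos

theorem pcond_of_notMem {H : Finset (Fin n × Fin m)} {e : Fin n × Fin m} (he : e ∉ H) :
    pcond x y H e = numContaining x y (insert e H) / numContaining x y H := by
  rw [pcond, if_neg he, numContaining, numContaining]

theorem prod_pcond_prefixImage_mul_numContaining {f : Fin M → Fin n × Fin m}
    (hf : Function.Injective f) (hG : BipDeg (univ.image f) x y) (s : ℕ) :
    (∏ r ∈ univ.filter (fun r : Fin M => s ≤ (r : ℕ)), pcond x y (prefixImage f r) (f r)) *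
      numContaining x y (prefixImage f s) = 1 := by
  by_cases hs : M ≤ s
  · rw [filter_false_of_mem fun r _ => by omega, prod_empty, one_mul, prefixImage_of_le f hs,
      hG.numContaining_self, Nat.cast_one]
  · rw [not_le] at hs
    have hsplit : univ.filter (fun r : Fin M => s ≤ (r : ℕ)) =
        insert ⟨s, hs⟩ (univ.filter fun r : Fin M => s + 1 ≤ (r : ℕ)) := by
      ext r
      simp only [mem_filter, mem_univ, true_and, mem_insert, Fin.ext_iff]
      omega
    have hpos : (0 : ℝ) < numContaining x y (prefixImage f s) := by
      exact_mod_cast numContaining_pos_of_subset hG (prefixImage_subset f s)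
    rw [hsplit, prod_insert (by simp), pcond_of_notMem (apply_notMem_prefixImage hf hs),
      ← prefixImage_succ f hs, ← prod_pcond_prefixImage_mul_numContaining hf hG (s + 1)]
    field_simp
termination_by M - s

end Telescoping

section Blocks

def block {n : ℕ} (x : Fin n → ℕ) (M : ℕ) (i : Fin n) : Finset (Fin M) :=
  univ.filter fun t : Fin M =>
    ∑ l ∈ Iio i, x l ≤ (t : ℕ) ∧ (t : ℕ) < ∑ l ∈ Iic i, x l

variable {n m M : ℕ} {x : Fin n → ℕ} {y : Fin m → ℕ}

theorem card_block (hx : ∑ i, x i = M) (i : Fin n) : #(block x M i) = x i := by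
  have hle : ∑ l ∈ Iic i, x l ≤ M := hx ▸ sum_le_sum_of_subset (subset_univ _)
  have himage : (block x M i).image Fin.val = Ico (∑ l ∈ Iio i, x l) (∑ l ∈ Iic i, x l) := by
    ext c
    simp only [block, mem_image, mem_filter, mem_univ, true_and, mem_Ico]
    exact ⟨by rintro ⟨t, ht, rfl⟩; exact ht, fun hc => ⟨⟨c, by omega⟩, hc, rfl⟩⟩
  rw [← card_image_of_injective _ Fin.val_injective, himage, Nat.card_Ico,
    ← add_sum_Iio_eq_sum_Iic]
  omega

theorem disjoint_block_of_lt {i i' : Fin n} (h : i < i') :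
    Disjoint (block x M i) (block x M i') := by
  have hsum : ∑ l ∈ Iic i, x l ≤ ∑ l ∈ Iio i', x l :=
    sum_le_sum_of_subset fun l hl => mem_Iio.2 ((mem_Iic.1 hl).trans_lt h)
  refine disjoint_left.2 fun t ht ht' => ?_
  simp only [block, mem_filter, mem_univ, true_and] at ht ht'
  omega

theorem pairwiseDisjoint_block : (Set.univ : Set (Fin n)).PairwiseDisjoint (block x M) := by
  intro i _ i' _ hne
  rcases hne.lt_or_gt with h | h
  · exact disjoint_block_of_lt h
  · exact (disjoint_block_of_lt h).symm

theorem biUnion_block (hx : ∑ i, x i = M) : univ.biUnion (block x M) = univ := by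
  refine eq_univ_of_card _ ?_
  rw [card_biUnion (coe_univ (α := Fin n) ▸ pairwiseDisjoint_block), Fintype.card_fin]
  simp [card_block hx, hx]

theorem exists_block_eq_fiber (hx : ∑ i, x i = M) :
    ∃ c : Fin M → Fin n, ∀ i, block x M i = ({t | c t = i} : Finset (Fin M)) := by
  have hcover (t : Fin M) : ∃ i, t ∈ block x M i := by
    simpa using (biUnion_block hx).ge (mem_univ t)
  choose c hc using hcover
  refine ⟨c, fun i => ?_⟩
  ext t
  simp only [mem_filter, mem_univ, true_and]
  refine ⟨fun ht => ?_, fun h => h ▸ hc t⟩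
  by_contra hne
  exact disjoint_left.1 (pairwiseDisjoint_block (Set.mem_univ _) (Set.mem_univ _) hne) (hc t) ht

theorem image_univ_eq_of_block {g : Fin M → Fin n × Fin m} {G : Finset (Fin n × Fin m)}
    (hx : ∑ i, x i = M) (h : ∀ i, G.filter (fun p => p.1 = i) = (block x M i).image g) :
    univ.image g = G := by
  rw [← biUnion_block hx, biUnion_image]
  simp_rw [← h]
  exact biUnion_filter_eq_of_maps_to fun p _ => mem_univ p.1

theorem InS.injective_and_bipDeg_image {g : Fin M → Fin n × Fin m} (hx : ∑ i, x i = M)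
    (hg : InS x y g) : Function.Injective g ∧ BipDeg (univ.image g) x y := by
  obtain ⟨G, hG, h⟩ := hg
  rw [image_univ_eq_of_block hx h]
  refine ⟨fun a b hab => ?_, hG⟩
  have hcard : #(univ.image g) = #(univ : Finset (Fin M)) := by
    rw [image_univ_eq_of_block hx h, hG.card_eq, hx, card_fin]
  exact card_image_iff.1 hcard (mem_univ a) (mem_univ b) hab

theorem inS_and_image_eq_iff {g : Fin M → Fin n × Fin m} {G : Finset (Fin n × Fin m)}
    (hx : ∑ i, x i = M) (hG : BipDeg G x y) :
    InS x y g ∧ univ.image g = G ↔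
      ∀ i, (block x M i).image g = G.filter (fun p => p.1 = i) := by
  constructor
  · rintro ⟨⟨G', -, h⟩, rfl⟩
    rw [image_univ_eq_of_block hx h]
    exact fun i => (h i).symm
  · intro h
    have h' i := (h i).symm
    exact ⟨⟨G, hG, h'⟩, image_univ_eq_of_block hx h'⟩

theorem card_inS (hx : ∑ i, x i = M) :
    Nat.card {g : Fin M → Fin n × Fin m // InS x y g} =
      Nat.card {G : Finset (Fin n × Fin m) // BipDeg G x y} * ∏ l, (x l).factorial := by
  classical
  obtain ⟨c, hc⟩ := exists_block_eq_fiber hx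
  have hfiber (G : Finset (Fin n × Fin m)) (hG : BipDeg G x y) :
      #{g : Fin M → Fin n × Fin m | InS x y g ∧ univ.image g = G} = ∏ l, (x l).factorial := by
    simp_rw [inS_and_image_eq_iff hx hG, hc]
    rw [← Fintype.card_subtype, ← Nat.card_eq_fintype_card, card_forall_image_fiber_eq]
    · exact prod_congr rfl fun i _ => by rw [hG.1 i]
    · intro i
      rw [← hc, card_block hx, hG.1]
  rw [Nat.card_eq_fintype_card, Fintype.card_subtype, Nat.card_eq_fintype_card,
    Fintype.card_subtype, card_eq_sum_card_fiberwise (f := fun g => univ.image g)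
      (t := {G | BipDeg G x y}) fun g hg => by
        simpa using ((mem_filter.1 hg).2.injective_and_bipDeg_image hx).2]
  rw [sum_congr rfl fun G hG => ?_, sum_const, smul_eq_mul]
  rw [filter_filter]
  exact hfiber G (mem_filter.1 hG).2

end Blocks

theorem sampling_conditional_probability_general (n m M : ℕ)
    (x : Fin n → ℕ) (y : Fin m → ℕ)
    (hx : ∑ i, x i = M)
    (f : Fin M → Fin n × Fin m) (hf : InS x y f)
    (t : ℕ) (i : Fin n) (j : ℕ) :
    ((∏ r ∈ Finset.univ.filter (fun r : Fin M => t ≤ (r : ℕ)),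
        pcond x y ((Finset.univ.filter fun q : Fin M => (q : ℕ) < (r : ℕ)).image f)
          (f r)) *
        (((x i - j + 1).factorial : ℝ))⁻¹ *
        (∏ l ∈ Finset.univ.filter fun l : Fin n => i < l, ((x l).factorial : ℝ))⁻¹
      = ((Nat.card {G : Finset (Fin n × Fin m) // BipDeg G x y ∧
            (Finset.univ.filter fun q : Fin M => (q : ℕ) < t).image f ⊆ G} : ℝ) *
          ((x i - j + 1).factorial : ℝ) *
          ∏ l ∈ Finset.univ.filter fun l : Fin n => i < l, ((x l).factorial : ℝ))⁻¹) ∧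
      ((∏ r : Fin M,
          pcond x y ((Finset.univ.filter fun q : Fin M => (q : ℕ) < (r : ℕ)).image f)
            (f r)) *
          (∏ l : Fin n, ((x l).factorial : ℝ))⁻¹
        = (Nat.card {g : Fin M → Fin n × Fin m // InS x y g} : ℝ)⁻¹) := by
  obtain ⟨hinj, hG⟩ := hf.injective_and_bipDeg_image hx
  have htelescope (s : ℕ) :=
    eq_inv_of_mul_eq_one_left (prod_pcond_prefixImage_mul_numContaining hinj hG s)
  have hfull : ∏ r : Fin M, pcond x y (prefixImage f r) (f r) =
      (Nat.card {G : Finset (Fin n × Fin m) // BipDeg G x y} : ℝ)⁻¹ := by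
    simpa [prefixImage_zero, numContaining_empty] using htelescope 0
  refine ⟨?_, ?_⟩
  · rw [mul_inv, mul_inv]
    exact congrArg (· * _ * _) (htelescope t)
  · rw [card_inS hx, Nat.cast_mul, Nat.cast_prod, mul_inv]
    exact congrArg (· * _) hfull

/-- For the sequential sampling algorithm, the conditional probability
of a complete sequence given its first `t` entries (steps `0,…,t-1`), when step `t`
processes vertex `v_i` at its `j`-th slot, equals
`1 / (N_t · (x_i - j + 1)! · ∏_{l > i} x_l!)` where `N_t` is the number of graphs with
degree sequence `(x,y)` containing the first `t` edges.  In particular the output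
distribution `π` is uniform on `S(x,y)`. -/
theorem sampling_conditional_probability (n m M : ℕ)
    (x : Fin n → ℕ) (y : Fin m → ℕ)
    (hx : ∑ i, x i = M) (hy : ∑ j, y j = M) (hM : 1 ≤ M)
    (hB : 0 < Nat.card {G : Finset (Fin n × Fin m) // BipDeg G x y})
    (f : Fin M → Fin n × Fin m) (hf : InS x y f)
    (t : ℕ) (i : Fin n) (j : ℕ) (hj1 : 1 ≤ j) (hjx : j ≤ x i)
    (ht : t = (j - 1) + ∑ l ∈ Finset.Iio i, x l) :
    ((∏ r ∈ Finset.univ.filter (fun r : Fin M => t ≤ (r : ℕ)),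
        pcond x y ((Finset.univ.filter fun q : Fin M => (q : ℕ) < (r : ℕ)).image f)
          (f r)) *
        (((x i - j + 1).factorial : ℝ))⁻¹ *
        (∏ l ∈ Finset.univ.filter fun l : Fin n => i < l, ((x l).factorial : ℝ))⁻¹
      = ((Nat.card {G : Finset (Fin n × Fin m) // BipDeg G x y ∧
            (Finset.univ.filter fun q : Fin M => (q : ℕ) < t).image f ⊆ G} : ℝ) *
          ((x i - j + 1).factorial : ℝ) *
          ∏ l ∈ Finset.univ.filter fun l : Fin n => i < l, ((x l).factorial : ℝ))⁻¹) ∧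
      ((∏ r : Fin M,
          pcond x y ((Finset.univ.filter fun q : Fin M => (q : ℕ) < (r : ℕ)).image f)
            (f r)) *
          (∏ l : Fin n, ((x l).factorial : ℝ))⁻¹
        = (Nat.card {g : Fin M → Fin n × Fin m // InS x y g} : ℝ)⁻¹) :=
  sampling_conditional_probability_general n m M x y hx f hf t i j
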